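/- Let κ₁, κ₂, κ₃ ∈ (−1/2, 1/2) and k, j ∈ {0, 1}. There exists C > 0 such that for every η ∈ ℝ, ∬_{ℝ²} ⟨η+η₂⟩^{−2+k} ⟨η₃−η₁⟩^{−2+j} ⟨η₁⟩^{−κ₁−1/2−j} ⟨η₂⟩^{−κ₂−1/2−k} ⟨η₃⟩^{−κ₃−1/2} dη₁dη₂ ≤ C ⟨η⟩^{−3/2−κ₁−κ₂−κ₃}, where η₃ := η − η₁ − η₂. -/

import Mathlib

open MeasureTheory Filter

noncomputable section

/-- Japanese bracket `⟨x⟩ = (1+x²)^{1/2}`. -/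
def jap (x : ℝ) : ℝ := Real.sqrt (1 + x ^ 2)

/-- Real (odd) cube root. -/
def cbrt (x : ℝ) : ℝ := Real.sign x * |x| ^ ((1 : ℝ) / 3)

/-- Membership in the space `Z^κ`. -/
def MemZ (κ : ℝ) (z : ℝ → ℂ) : Prop :=
  Differentiable ℝ z ∧
    BddAbove (Set.range fun ξ : ℝ => jap ξ ^ κ * ‖z ξ‖) ∧
    BddAbove (Set.range fun ξ : ℝ => jap ξ ^ (κ + 1) * ‖deriv z ξ‖)

/-- The `Z^κ` norm. -/
def ZNorm (κ : ℝ) (z : ℝ → ℂ) : ℝ :=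
  (⨆ ξ : ℝ, jap ξ ^ κ * ‖z ξ‖) + ⨆ ξ : ℝ, jap ξ ^ (κ + 1) * ‖deriv z ξ‖

/-- Membership in the space `Y^κ`. -/
def MemY (κ : ℝ) (z : ℝ → ℂ) : Prop :=
  (∀ ξ : ℝ, ξ ≠ 0 → DifferentiableAt ℝ z ξ) ∧
    BddAbove ((fun ξ : ℝ => ‖z ξ‖ / abs (Real.log (abs ξ))) '' {ξ : ℝ | 0 < |ξ| ∧ |ξ| ≤ 1 / 2}) ∧
    BddAbove ((fun ξ : ℝ => |ξ| * ‖deriv z ξ‖) '' {ξ : ℝ | 0 < |ξ| ∧ |ξ| ≤ 1 / 2}) ∧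
    BddAbove ((fun ξ : ℝ => jap ξ ^ κ * ‖z ξ‖) '' {ξ : ℝ | 1 / 2 ≤ |ξ|}) ∧
    BddAbove ((fun ξ : ℝ => jap ξ ^ (κ + 1) * ‖deriv z ξ‖) '' {ξ : ℝ | 1 / 2 ≤ |ξ|})

/-- The `Y^κ` norm. -/
def YNorm (κ : ℝ) (z : ℝ → ℂ) : ℝ :=
  sSup ((fun ξ : ℝ => ‖z ξ‖ / abs (Real.log (abs ξ))) '' {ξ : ℝ | 0 < |ξ| ∧ |ξ| ≤ 1 / 2}) +
    sSup ((fun ξ : ℝ => |ξ| * ‖deriv z ξ‖) '' {ξ : ℝ | 0 < |ξ| ∧ |ξ| ≤ 1 / 2}) +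
    sSup ((fun ξ : ℝ => jap ξ ^ κ * ‖z ξ‖) '' {ξ : ℝ | 1 / 2 ≤ |ξ|}) +
    sSup ((fun ξ : ℝ => jap ξ ^ (κ + 1) * ‖deriv z ξ‖) '' {ξ : ℝ | 1 / 2 ≤ |ξ|})

/-- Improper integral over `ℝ²`, as the limit of integrals over `[-R,R]²`. -/
def HasImproper2 (F : ℝ → ℝ → ℂ) (L : ℂ) : Prop :=
  Tendsto (fun R : ℝ => ∫ x in (-R)..R, ∫ y in (-R)..R, F x y) atTop (nhds L)

/-- Improper integral over `ℝ³`, as the limit of integrals over `[-R,R]³`. -/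
def HasImproper3 (F : ℝ → ℝ → ℝ → ℂ) (L : ℂ) : Prop :=
  Tendsto (fun R : ℝ => ∫ x in (-R)..R, ∫ y in (-R)..R, ∫ t in (-R)..R, F x y t)
    atTop (nhds L)

/-- Integrand of the quadrilinear operator `M` (quartic KdV). -/
def Mker (f₁ f₂ f₃ f₄ : ℝ → ℂ) (η η₁ η₂ η₃ : ℝ) : ℂ :=
  Complex.exp (-(Complex.I) *
      ((η ^ 3 - η₁ ^ 3 - η₂ ^ 3 - η₃ ^ 3 - (η - η₁ - η₂ - η₃) ^ 3 : ℝ) : ℂ)) *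
    (f₁ η₁ * f₂ η₂ * f₃ η₃ * f₄ (η - η₁ - η₂ - η₃)) /
    ((cbrt (η₁ * η₂ * η₃ * (η - η₁ - η₂ - η₃)) : ℝ) : ℂ)

/-- Integrand of the trilinear operator `I` (modified Benjamin–Ono). -/
def Iker (g₁ g₂ g₃ : ℝ → ℂ) (η η₁ η₂ : ℝ) : ℂ :=
  Complex.exp (Complex.I *
      ((η * |η| - η₁ * |η₁| - η₂ * |η₂| - (η - η₁ - η₂) * |η - η₁ - η₂| : ℝ) : ℂ)) *
    (g₁ η₁ * g₂ η₂ * g₃ (η - η₁ - η₂)) /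
    ((Real.sqrt |η₁ * η₂ * (η - η₁ - η₂)| : ℝ) : ℂ)

/-- Integrand of the trilinear operator `T` (cubic NLS). -/
def Tker (h₁ h₂ h₃ : ℝ → ℂ) (η η₁ η₂ : ℝ) : ℂ :=
  Complex.exp (-(Complex.I) *
      ((η ^ 2 - η₁ ^ 2 + η₂ ^ 2 - (η - η₁ - η₂) ^ 2 : ℝ) : ℂ)) *
    (h₁ η₁ * (starRingEnd ℂ) (h₂ η₂) * h₃ (η - η₁ - η₂))

/-- The 4KdV high-frequency ansatz `S_A`. -/
def SA (χ : ℝ → ℝ) (A : ℂ) (ξ : ℝ) : ℂ :=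
  A * (χ ξ : ℂ) + (starRingEnd ℂ) A * (χ (-ξ) : ℂ)

/-- The mBO ansatz `S_{A,a,B}` for positive frequencies. -/
def SabPos (χ : ℝ → ℝ) (A B : ℂ) (a : ℝ) (ξ : ℝ) : ℂ :=
  (A * Complex.exp (Complex.I * ((a * Real.log ξ : ℝ) : ℂ)) +
      B * Complex.exp (Complex.I * ((2 * ξ ^ 2 / 3 + 3 * a * Real.log ξ : ℝ) : ℂ)) /
        ((ξ ^ 2 : ℝ) : ℂ)) *
    ((χ ξ : ℝ) : ℂ)

/-- The mBO ansatz `S_{A,a,B}`. -/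
def Sab (χ : ℝ → ℝ) (A B : ℂ) (a : ℝ) (ξ : ℝ) : ℂ :=
  if 0 < ξ then SabPos χ A B a ξ
  else if ξ < 0 then (starRingEnd ℂ) (SabPos χ A B a (-ξ))
  else 0

/-- The NLS ansatz `S_A`. -/
def SAnls (χ : ℝ → ℝ) (A : ℂ) (ξ : ℝ) : ℂ :=
  A * Complex.exp (-(Complex.I) * ((‖A‖ ^ 2 / (2 * Real.pi) * Real.log |ξ| : ℝ) : ℂ)) *
      ((χ ξ : ℝ) : ℂ) +
    A * Complex.exp (Complex.I * ((‖A‖ ^ 2 / (2 * Real.pi) * Real.log |ξ| : ℝ) : ℂ)) *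
      ((χ (-ξ) : ℝ) : ℂ)

/-!
With `η₃ = η - η₁ - η₂` the integral is an iterated one-dimensional convolution: integrating
first in `η₁` (with `w = η - η₂`, so that `η₃ - η₁ = -2η₁ + w`) and then in `η₂` (with `w = η`),
each step is an instance of
  `∫ ⟨αx + βw⟩^{-(2-t)} ⟨x⟩^{-(q+t)} ⟨w - x⟩^{-r} dx ≲ ⟨w⟩^{-(q+r)}`
for `0 < q ≤ 1`, `0 ≤ r ≤ 2`, `t ∈ {0, 1}`.
To prove it, cut `ℝ` at distance `|w|/4` from `0` and from `w`. Near `0` both `⟨αx + βw⟩` and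
`⟨w - x⟩` are `≳ ⟨w⟩`, and `⟨x⟩^{-(q+t)}` is integrated over an interval of length `|w|/2`; near
`w` the same holds with the roles of `⟨x⟩` and `⟨w - x⟩` exchanged. Away from both points
`⟨x⟩^{-q} ⟨w - x⟩^{-r} ≲ ⟨w⟩^{-(q+r)}`, and by weighted AM–GM the remaining
`⟨αx + βw⟩^{-(2-t)} ⟨x⟩^{-t}` is at most `⟨αx + βw⟩^{-2} + ⟨x⟩^{-2}`, which is integrable.
-/

open Set Metric
open scoped ENNReal

lemma setLIntegral_ofReal_le_of_le_mul {X : Type*} [MeasurableSpace X] {μ : Measure X}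
    {S : Set X} (hS : MeasurableSet S) {f g : X → ℝ} {K J M : ℝ} {C : ℝ≥0∞} (hK : 0 ≤ K)
    (hfg : ∀ x ∈ S, f x ≤ K * g x) (hg : ∫⁻ x in S, ENNReal.ofReal (g x) ∂μ ≤ C * ENNReal.ofReal J)
    (hM : K * J ≤ M) :
    ∫⁻ x in S, ENNReal.ofReal (f x) ∂μ ≤ C * ENNReal.ofReal M := by
  calc ∫⁻ x in S, ENNReal.ofReal (f x) ∂μ
      ≤ ∫⁻ x in S, ENNReal.ofReal K * ENNReal.ofReal (g x) ∂μ :=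
        setLIntegral_mono' hS fun x hx =>
          (ENNReal.ofReal_le_ofReal (hfg x hx)).trans_eq (ENNReal.ofReal_mul hK)
    _ = ENNReal.ofReal K * ∫⁻ x in S, ENNReal.ofReal (g x) ∂μ :=
        lintegral_const_mul' _ _ ENNReal.ofReal_ne_top
    _ ≤ ENNReal.ofReal K * (C * ENNReal.ofReal J) := by gcongr
    _ = C * ENNReal.ofReal (K * J) := by rw [ENNReal.ofReal_mul hK, mul_left_comm]
    _ ≤ C * ENNReal.ofReal M := by gcongr

lemma lintegral_prod_le_mul_lintegral {X Y : Type*} [MeasurableSpace X] [MeasurableSpace Y]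
    {μ : Measure X} {ν : Measure Y} [SFinite μ] [SFinite ν] {f : X × Y → ℝ≥0∞} {P H : Y → ℝ≥0∞}
    {G : Y → X → ℝ≥0∞} {C : ℝ≥0∞} (hC : C ≠ ∞) (hP : ∀ y, P y ≠ ∞)
    (hf : ∀ x y, f (x, y) = P y * G y x) (hG : ∀ y, ∫⁻ x, G y x ∂μ ≤ C * H y) :
    ∫⁻ p, f p ∂μ.prod ν ≤ C * ∫⁻ y, P y * H y ∂ν := by
  calc ∫⁻ p, f p ∂μ.prod ν = ∫⁻ p, f p.swap ∂ν.prod μ := (lintegral_prod_swap f).symm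
    _ ≤ ∫⁻ y, ∫⁻ x, P y * G y x ∂μ ∂ν := by simpa only [Prod.swap, hf] using lintegral_prod_le _
    _ ≤ ∫⁻ y, P y * (C * H y) ∂ν := by
        gcongr with y
        rw [lintegral_const_mul' _ _ (hP y)]
        gcongr
        exact hG y
    _ = C * ∫⁻ y, P y * H y ∂ν := by
        simp_rw [mul_left_comm (P _) C]
        exact lintegral_const_mul' _ _ hC

lemma exists_pos_forall_mul_ofReal_le {C : ℝ≥0∞} (hC : C < ∞) :
    ∃ D > (0 : ℝ), ∀ x : ℝ, C * ENNReal.ofReal x ≤ ENNReal.ofReal (D * x) := by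
  refine ⟨C.toReal + 1, by positivity, fun x => ?_⟩
  rcases le_or_gt 0 x with hx | hx
  · rw [ENNReal.ofReal_mul (by positivity)]
    gcongr
    calc C = ENNReal.ofReal C.toReal := (ENNReal.ofReal_toReal hC.ne).symm
      _ ≤ _ := ENNReal.ofReal_le_ofReal (by linarith)
  · simp [ENNReal.ofReal_of_nonpos hx.le]

lemma jap_pos (x : ℝ) : 0 < jap x := Real.sqrt_pos.2 (by positivity)

lemma jap_rpow_nonneg (x s : ℝ) : 0 ≤ jap x ^ s := Real.rpow_nonneg (jap_pos x).le s

lemma one_le_jap (x : ℝ) : 1 ≤ jap x :=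
  Real.one_le_sqrt.2 (by nlinarith [sq_nonneg x])

lemma abs_le_jap (x : ℝ) : |x| ≤ jap x :=
  Real.abs_le_sqrt (by linarith)

lemma jap_sub_comm (x y : ℝ) : jap (x - y) = jap (y - x) := by
  rw [jap, jap, ← neg_sub, neg_sq]

lemma jap_rpow_eq_one_add_norm_sq_rpow (x s : ℝ) : jap x ^ s = (1 + ‖x‖ ^ 2) ^ (s / 2) := by
  rw [jap, Real.sqrt_eq_rpow, ← Real.rpow_mul (by positivity), Real.norm_eq_abs, sq_abs]
  ring_nf

@[fun_prop]
lemma measurable_jap : Measurable jap := by unfold jap; fun_prop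

lemma jap_le_mul_jap {x y c : ℝ} (hc : 1 ≤ c) (h : |y| ≤ c * |x|) : jap y ≤ c * jap x := by
  have hy : y ^ 2 ≤ c ^ 2 * x ^ 2 := by
    rw [← sq_abs y, ← sq_abs x, ← mul_pow]
    exact pow_le_pow_left₀ (abs_nonneg y) h 2
  rw [jap, jap, ← Real.sqrt_sq (by linarith : 0 ≤ c), ← Real.sqrt_mul (by positivity)]
  exact Real.sqrt_le_sqrt (by nlinarith)

lemma jap_rpow_neg_le_mul {x y c s : ℝ} (hc : 1 ≤ c) (h : |y| ≤ c * |x|) (hs : 0 ≤ s) :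
    jap x ^ (-s) ≤ c ^ s * jap y ^ (-s) := by
  have hc0 : 0 < c := by linarith
  have hcx : jap y ^ (-s) ≥ (c * jap x) ^ (-s) :=
    Real.rpow_le_rpow_of_nonpos (jap_pos y) (jap_le_mul_jap hc h) (by linarith)
  rw [Real.mul_rpow hc0.le (jap_pos x).le, Real.rpow_neg hc0.le] at hcx
  have : 0 < c ^ s := Real.rpow_pos_of_pos hc0 s
  calc jap x ^ (-s) = c ^ s * ((c ^ s)⁻¹ * jap x ^ (-s)) := by field_simp
    _ ≤ c ^ s * jap y ^ (-s) := by gcongr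

lemma jap_rpow_le_jap_rpow {x y e : ℝ} (h : |y| ≤ |x|) (he : 0 ≤ e) :
    jap y ^ e ≤ jap x ^ e :=
  Real.rpow_le_rpow (jap_pos y).le (by simpa using jap_le_mul_jap le_rfl (by simpa using h)) he

lemma jap_rpow_neg_mul_jap_rpow_neg_le_add {a b t : ℝ} (ht : 0 ≤ t) (ht2 : t ≤ 2) :
    jap a ^ (-(2 - t)) * jap b ^ (-t) ≤ jap a ^ (-2 : ℝ) + jap b ^ (-2 : ℝ) := by
  have key := Real.geom_mean_le_arith_mean2_weighted (w₁ := (2 - t) / 2) (w₂ := t / 2)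
    (by linarith) (by linarith) (jap_rpow_nonneg a (-2)) (jap_rpow_nonneg b (-2)) (by ring)
  rw [← Real.rpow_mul (jap_pos a).le, ← Real.rpow_mul (jap_pos b).le] at key
  calc jap a ^ (-(2 - t)) * jap b ^ (-t)
      = jap a ^ (-2 * ((2 - t) / 2)) * jap b ^ (-2 * (t / 2)) := by ring_nf
    _ ≤ _ := key
    _ ≤ jap a ^ (-2 : ℝ) + jap b ^ (-2 : ℝ) := by
      nlinarith [jap_rpow_nonneg a (-2), jap_rpow_nonneg b (-2)]

lemma lintegral_jap_rpow_neg_lt_top {s : ℝ} (hs : 1 < s) :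
    ∫⁻ x : ℝ, ENNReal.ofReal (jap x ^ (-s)) < ∞ := by
  simp_rw [jap_rpow_eq_one_add_norm_sq_rpow]
  exact (integrable_rpow_neg_one_add_norm_sq (by simpa using hs)).lintegral_lt_top

lemma lintegral_jap_mul_add_rpow {α : ℝ} (hα : α ≠ 0) (c s : ℝ) :
    ∫⁻ x, ENNReal.ofReal (jap (α * x + c) ^ s) =
      ENNReal.ofReal |α⁻¹| * ∫⁻ x, ENNReal.ofReal (jap x ^ s) := by
  have h := lintegral_map (μ := volume) (f := fun y => ENNReal.ofReal (jap (y + c) ^ s))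
    (by fun_prop) (measurable_const_mul α)
  rw [Real.map_volume_mul_left hα, lintegral_smul_measure,
    lintegral_add_right_eq_self (fun y => ENNReal.ofReal (jap y ^ s))] at h
  exact h.symm

lemma setLIntegral_closedBall_jap_rpow_neg_le {s e : ℝ} (hs : 0 ≤ s)
    (h : 1 < s ∧ 0 ≤ e ∨ 1 ≤ e) :
    ∃ C < ∞, ∀ c L : ℝ, ∫⁻ x in closedBall c L, ENNReal.ofReal (jap (x - c) ^ (-s)) ≤
      C * ENNReal.ofReal (jap L ^ e) := by
  rcases h with ⟨hs1, he⟩ | he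
  · refine ⟨_, lintegral_jap_rpow_neg_lt_top hs1, fun c L => ?_⟩
    calc ∫⁻ x in closedBall c L, ENNReal.ofReal (jap (x - c) ^ (-s))
        ≤ ∫⁻ x, ENNReal.ofReal (jap (x - c) ^ (-s)) := setLIntegral_le_lintegral _ _
      _ = ∫⁻ x, ENNReal.ofReal (jap x ^ (-s)) :=
        lintegral_sub_right_eq_self (fun x => ENNReal.ofReal (jap x ^ (-s))) c
      _ ≤ _ * ENNReal.ofReal (jap L ^ e) :=
        le_mul_of_one_le_right' (ENNReal.one_le_ofReal.2 (Real.one_le_rpow (one_le_jap L) he))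
  · refine ⟨2, by simp, fun c L => ?_⟩
    have hL : 2 * L ≤ 2 * jap L ^ e := by
      have := (le_abs_self L).trans (abs_le_jap L)
      have := Real.self_le_rpow_of_one_le (one_le_jap L) he
      linarith
    calc ∫⁻ x in closedBall c L, ENNReal.ofReal (jap (x - c) ^ (-s))
        ≤ ∫⁻ _ in closedBall c L, 1 := lintegral_mono fun x => ENNReal.ofReal_le_one.2 <|
          Real.rpow_le_one_of_one_le_of_nonpos (one_le_jap _) (by linarith)
      _ = ENNReal.ofReal (2 * L) := by simp [Real.volume_closedBall]
      _ ≤ 2 * ENNReal.ofReal (jap L ^ e) := by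
        rw [← ENNReal.ofReal_ofNat 2, ← ENNReal.ofReal_mul zero_le_two]
        exact ENNReal.ofReal_le_ofReal hL

lemma abs_le_two_mul_abs_add_of_abs_le {α β w x : ℝ} (hβ : |α| / 4 + 1 / 2 ≤ |β|)
    (hx : |x| ≤ |w| / 4) : |w| ≤ 2 * |α * x + β * w| := by
  have h := abs_sub (α * x + β * w) (α * x)
  rw [add_sub_cancel_left, abs_mul, abs_mul] at h
  have := mul_le_mul_of_nonneg_left hx (abs_nonneg α)
  have := mul_le_mul_of_nonneg_right hβ (abs_nonneg w)
  linarith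

lemma abs_le_two_mul_abs_add_of_abs_sub_le {α β w x : ℝ} (hαβ : |α| / 4 + 1 / 2 ≤ |α + β|)
    (hx : |w - x| ≤ |w| / 4) : |w| ≤ 2 * |α * x + β * w| := by
  have h := abs_add_le (α * x + β * w) (α * (w - x))
  rw [show α * x + β * w + α * (w - x) = (α + β) * w by ring, abs_mul, abs_mul] at h
  have := mul_le_mul_of_nonneg_left hx (abs_nonneg α)
  have := mul_le_mul_of_nonneg_right hαβ (abs_nonneg w)
  linarith

namespace JapConvolution

def kernel (α β q r t w x : ℝ) : ℝ :=
  jap (α * x + β * w) ^ (-(2 - t)) * jap x ^ (-(q + t)) * jap (w - x) ^ (-r)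

variable {α β q r t : ℝ}

lemma setLIntegral_near_zero_le (hβ : |α| / 4 + 1 / 2 ≤ |β|) (ht : t = 0 ∨ t = 1)
    (hq : 0 < q) (hq1 : q ≤ 1) (hr : 0 ≤ r) :
    ∃ C < ∞, ∀ w, ∫⁻ x in closedBall 0 (|w| / 4), ENNReal.ofReal (kernel α β q r t w x) ≤
        C * ENNReal.ofReal (jap w ^ (-(q + r))) := by
  have ht0 : 0 ≤ t := by rcases ht with rfl | rfl <;> norm_num
  have ht1 : t ≤ 1 := by rcases ht with rfl | rfl <;> norm_num
  obtain ⟨C, hC, hball⟩ := setLIntegral_closedBall_jap_rpow_neg_le (s := q + t) (e := 1 - t)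
    (by linarith) (by rcases ht with rfl | rfl <;> norm_num [hq])
  refine ⟨C * ENNReal.ofReal (2 ^ (2 - t) * 2 ^ r), ENNReal.mul_lt_top hC ENNReal.ofReal_lt_top,
    fun w => ?_⟩
  have hw := jap_pos w
  rw [mul_assoc, ← ENNReal.ofReal_mul (by positivity)]
  refine setLIntegral_ofReal_le_of_le_mul measurableSet_closedBall
    (K := 2 ^ (2 - t) * 2 ^ r * (jap w ^ (-(2 - t)) * jap w ^ (-r))) (by positivity)
    (fun x hx => ?_) (hball 0 _) ?_
  · rw [mem_closedBall, dist_zero_right, Real.norm_eq_abs] at hx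
    have hA := jap_rpow_neg_le_mul one_le_two (abs_le_two_mul_abs_add_of_abs_le hβ hx)
      (by linarith : 0 ≤ 2 - t)
    have hwx : |w| ≤ 2 * |w - x| := by
      linarith [abs_sub_abs_le_abs_sub w x, abs_nonneg w]
    have hB := jap_rpow_neg_le_mul one_le_two hwx hr
    have := jap_pos x
    have := jap_pos (w - x)
    calc jap (α * x + β * w) ^ (-(2 - t)) * jap x ^ (-(q + t)) * jap (w - x) ^ (-r)
        ≤ (2 ^ (2 - t) * jap w ^ (-(2 - t))) * jap x ^ (-(q + t)) * (2 ^ r * jap w ^ (-r)) := by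
          gcongr
      _ = _ := by rw [sub_zero]; ring
  · have hJ : jap (|w| / 4) ^ (1 - t) ≤ jap w ^ (1 - t) :=
      jap_rpow_le_jap_rpow (by rw [abs_div, abs_abs]; linarith [abs_nonneg w]) (by linarith)
    calc 2 ^ (2 - t) * 2 ^ r * (jap w ^ (-(2 - t)) * jap w ^ (-r)) * jap (|w| / 4) ^ (1 - t)
        ≤ 2 ^ (2 - t) * 2 ^ r * (jap w ^ (-(2 - t)) * jap w ^ (-r) * jap w ^ (1 - t)) := by
          rw [mul_assoc]; gcongr
      _ ≤ 2 ^ (2 - t) * 2 ^ r * jap w ^ (-(q + r)) := by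
          rw [← Real.rpow_add hw, ← Real.rpow_add hw]
          gcongr
          · exact one_le_jap w
          · linarith

lemma setLIntegral_near_self_le (hαβ : |α| / 4 + 1 / 2 ≤ |α + β|) (ht0 : 0 ≤ t)
    (ht2 : t ≤ 2) (hq : 0 ≤ q) (hr : 0 ≤ r) (hr2 : r ≤ 2) :
    ∃ C < ∞, ∀ w, ∫⁻ x in closedBall w (|w| / 4), ENNReal.ofReal (kernel α β q r t w x) ≤
        C * ENNReal.ofReal (jap w ^ (-(q + r))) := by
  obtain ⟨C, hC, hball⟩ := setLIntegral_closedBall_jap_rpow_neg_le (s := r) (e := 2 - r) hr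
    (by rcases le_or_gt r 1 with h | h
        · exact .inr (by linarith)
        · exact .inl ⟨h, by linarith⟩)
  refine ⟨C * ENNReal.ofReal (2 ^ (2 - t) * 2 ^ (q + t)),
    ENNReal.mul_lt_top hC ENNReal.ofReal_lt_top, fun w => ?_⟩
  have hw := jap_pos w
  rw [mul_assoc, ← ENNReal.ofReal_mul (by positivity)]
  refine setLIntegral_ofReal_le_of_le_mul measurableSet_closedBall
    (K := 2 ^ (2 - t) * 2 ^ (q + t) * (jap w ^ (-(2 - t)) * jap w ^ (-(q + t))))
    (by positivity) (fun x hx => ?_) (hball w _) ?_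
  · rw [mem_closedBall, Real.dist_eq, abs_sub_comm] at hx
    have hA := jap_rpow_neg_le_mul one_le_two (abs_le_two_mul_abs_add_of_abs_sub_le hαβ hx)
      (by linarith : 0 ≤ 2 - t)
    have hwx : |w| ≤ 2 * |x| := by
      linarith [abs_sub_abs_le_abs_sub w x, abs_nonneg w]
    have hX := jap_rpow_neg_le_mul one_le_two hwx (by linarith : 0 ≤ q + t)
    have := jap_pos x
    have := jap_pos (w - x)
    calc jap (α * x + β * w) ^ (-(2 - t)) * jap x ^ (-(q + t)) * jap (w - x) ^ (-r)
        ≤ (2 ^ (2 - t) * jap w ^ (-(2 - t))) * (2 ^ (q + t) * jap w ^ (-(q + t))) *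
            jap (w - x) ^ (-r) := by
          gcongr
      _ = _ := by rw [jap_sub_comm]; ring
  · have hJ : jap (|w| / 4) ^ (2 - r) ≤ jap w ^ (2 - r) :=
      jap_rpow_le_jap_rpow (by rw [abs_div, abs_abs]; linarith [abs_nonneg w]) (by linarith)
    calc 2 ^ (2 - t) * 2 ^ (q + t) * (jap w ^ (-(2 - t)) * jap w ^ (-(q + t))) *
          jap (|w| / 4) ^ (2 - r)
        ≤ 2 ^ (2 - t) * 2 ^ (q + t) *
            (jap w ^ (-(2 - t)) * jap w ^ (-(q + t)) * jap w ^ (2 - r)) := by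
          rw [mul_assoc]; gcongr
      _ = 2 ^ (2 - t) * 2 ^ (q + t) * jap w ^ (-(q + r)) := by
          rw [← Real.rpow_add hw, ← Real.rpow_add hw]
          ring_nf

lemma setLIntegral_far_le (hα : α ≠ 0) (ht0 : 0 ≤ t) (ht2 : t ≤ 2) (hq : 0 ≤ q) (hr : 0 ≤ r) :
    ∃ C < ∞, ∀ w, ∫⁻ x in (closedBall 0 (|w| / 4) ∪ closedBall w (|w| / 4))ᶜ,
      ENNReal.ofReal (kernel α β q r t w x) ≤ C * ENNReal.ofReal (jap w ^ (-(q + r))) := by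
  set I := ∫⁻ x, ENNReal.ofReal (jap x ^ (-2 : ℝ))
  have hI : I < ∞ := lintegral_jap_rpow_neg_lt_top one_lt_two
  refine ⟨(ENNReal.ofReal |α⁻¹| + 1) * I * ENNReal.ofReal (4 ^ q * 4 ^ r), by finiteness,
    fun w => ?_⟩
  have hw := jap_pos w
  rw [mul_assoc _ (ENNReal.ofReal _), ← ENNReal.ofReal_mul (by positivity)]
  refine setLIntegral_ofReal_le_of_le_mul (MeasurableSet.compl (by measurability))
    (K := 4 ^ q * 4 ^ r * (jap w ^ (-q) * jap w ^ (-r)))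
    (g := fun x => jap (α * x + β * w) ^ (-2 : ℝ) + jap x ^ (-2 : ℝ)) (J := 1)
    (by positivity) (fun x hx => ?_) ?_ ?_
  · simp only [mem_compl_iff, mem_union, mem_closedBall, Real.dist_eq, sub_zero, not_or,
      not_le] at hx
    have hX := jap_rpow_neg_le_mul (c := 4) (by norm_num) (by linarith : |w| ≤ 4 * |x|) hq
    have hW := jap_rpow_neg_le_mul (c := 4) (by norm_num)
      (by rw [abs_sub_comm]; linarith : |w| ≤ 4 * |w - x|) hr
    have hAM := jap_rpow_neg_mul_jap_rpow_neg_le_add (a := α * x + β * w) (b := x) ht0 ht2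
    have := jap_pos x
    have := jap_pos (w - x)
    have := jap_pos (α * x + β * w)
    calc kernel α β q r t w x
        = (jap (α * x + β * w) ^ (-(2 - t)) * jap x ^ (-t)) *
            (jap x ^ (-q) * jap (w - x) ^ (-r)) := by
          rw [kernel, neg_add, Real.rpow_add (jap_pos x)]; ring
      _ ≤ (jap (α * x + β * w) ^ (-2 : ℝ) + jap x ^ (-2 : ℝ)) *
            ((4 ^ q * jap w ^ (-q)) * (4 ^ r * jap w ^ (-r))) := by
          gcongr
      _ = _ := by ring
  · rw [ENNReal.ofReal_one, mul_one]
    calc ∫⁻ x in (closedBall 0 (|w| / 4) ∪ closedBall w (|w| / 4))ᶜ,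
          ENNReal.ofReal (jap (α * x + β * w) ^ (-2 : ℝ) + jap x ^ (-2 : ℝ))
        ≤ ∫⁻ x, ENNReal.ofReal (jap (α * x + β * w) ^ (-2 : ℝ) + jap x ^ (-2 : ℝ)) :=
          setLIntegral_le_lintegral _ _
      _ = (∫⁻ x, ENNReal.ofReal (jap (α * x + β * w) ^ (-2 : ℝ))) + I := by
          simp_rw [ENNReal.ofReal_add (jap_rpow_nonneg _ _) (jap_rpow_nonneg _ _)]
          exact lintegral_add_left
            (by fun_prop : Measurable fun x => ENNReal.ofReal (jap (α * x + β * w) ^ (-2 : ℝ))) _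
      _ = (ENNReal.ofReal |α⁻¹| + 1) * I := by
          rw [lintegral_jap_mul_add_rpow hα (β * w) (-2)]; ring
  · rw [mul_one, ← Real.rpow_add hw, neg_add]

theorem lintegral_le (hα : α ≠ 0) (hβ : |α| / 4 + 1 / 2 ≤ |β|)
    (hαβ : |α| / 4 + 1 / 2 ≤ |α + β|) (ht : t = 0 ∨ t = 1) (hq : 0 < q) (hq1 : q ≤ 1)
    (hr : 0 ≤ r) (hr2 : r ≤ 2) :
    ∃ C < ∞, ∀ w, ∫⁻ x, ENNReal.ofReal (kernel α β q r t w x) ≤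
      C * ENNReal.ofReal (jap w ^ (-(q + r))) := by
  have ht0 : 0 ≤ t := by rcases ht with rfl | rfl <;> norm_num
  have ht2 : t ≤ 2 := by rcases ht with rfl | rfl <;> norm_num
  obtain ⟨C₀, hC₀, h₀⟩ := setLIntegral_near_zero_le hβ ht hq hq1 hr
  obtain ⟨C₁, hC₁, h₁⟩ := setLIntegral_near_self_le hαβ ht0 ht2 hq.le hr hr2
  obtain ⟨C₂, hC₂, h₂⟩ := setLIntegral_far_le (β := β) hα ht0 ht2 hq.le hr
  refine ⟨C₀ + C₁ + C₂, by finiteness, fun w => ?_⟩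
  set B₀ := closedBall (0 : ℝ) (|w| / 4)
  set B₁ := closedBall w (|w| / 4)
  calc ∫⁻ x, ENNReal.ofReal (kernel α β q r t w x)
      = ∫⁻ x in B₀ ∪ B₁ ∪ (B₀ ∪ B₁)ᶜ, ENNReal.ofReal (kernel α β q r t w x) := by
        rw [union_compl_self, Measure.restrict_univ]
    _ ≤ (∫⁻ x in B₀, ENNReal.ofReal (kernel α β q r t w x)) +
          (∫⁻ x in B₁, ENNReal.ofReal (kernel α β q r t w x)) +
          ∫⁻ x in (B₀ ∪ B₁)ᶜ, ENNReal.ofReal (kernel α β q r t w x) :=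
        (lintegral_union_le _ _ _).trans (by gcongr; exact lintegral_union_le _ _ _)
    _ ≤ (C₀ + C₁ + C₂) * ENNReal.ofReal (jap w ^ (-(q + r))) := by
        rw [add_mul, add_mul]
        exact add_le_add (add_le_add (h₀ w) (h₁ w)) (h₂ w)

end JapConvolution

/-- A weighted convolution estimate: with `η₃ := η − η₁ − η₂`,
`∬ ⟨η+η₂⟩^{−2+k} ⟨η₃−η₁⟩^{−2+j} ⟨η₁⟩^{−κ₁−1/2−j} ⟨η₂⟩^{−κ₂−1/2−k} ⟨η₃⟩^{−κ₃−1/2} dη₁dη₂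
  ≤ C ⟨η⟩^{−3/2−κ₁−κ₂−κ₃}`. -/
theorem weighted_convolution_estimate (κ₁ κ₂ κ₃ : ℝ)
    (hκ₁ : κ₁ ∈ Set.Ioo (-(1 : ℝ) / 2) (1 / 2))
    (hκ₂ : κ₂ ∈ Set.Ioo (-(1 : ℝ) / 2) (1 / 2))
    (hκ₃ : κ₃ ∈ Set.Ioo (-(1 : ℝ) / 2) (1 / 2))
    (k j : ℝ) (hk : k = 0 ∨ k = 1) (hj : j = 0 ∨ j = 1) :
    ∃ C > (0 : ℝ), ∀ η : ℝ,
      (∫⁻ p : ℝ × ℝ, ENNReal.ofReal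
          (jap (η + p.2) ^ (-2 + k) *
            jap ((η - p.1 - p.2) - p.1) ^ (-2 + j) *
            jap p.1 ^ (-κ₁ - 1 / 2 - j) *
            jap p.2 ^ (-κ₂ - 1 / 2 - k) *
            jap (η - p.1 - p.2) ^ (-κ₃ - 1 / 2))) ≤
        ENNReal.ofReal (C * jap η ^ (-(3 : ℝ) / 2 - κ₁ - κ₂ - κ₃)) := by
  obtain ⟨hκ₁, hκ₁'⟩ := hκ₁
  obtain ⟨hκ₂, hκ₂'⟩ := hκ₂
  obtain ⟨hκ₃, hκ₃'⟩ := hκ₃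
  obtain ⟨C₁, hC₁, h₁⟩ := JapConvolution.lintegral_le (α := -2) (β := 1) (q := κ₁ + 1 / 2)
    (r := κ₃ + 1 / 2) (by norm_num) (by norm_num) (by norm_num) hj (by linarith) (by linarith)
    (by linarith) (by linarith)
  obtain ⟨C₂, hC₂, h₂⟩ := JapConvolution.lintegral_le (α := 1) (β := 1) (q := κ₂ + 1 / 2)
    (r := κ₁ + κ₃ + 1) (by norm_num) (by norm_num) (by norm_num) hk (by linarith) (by linarith)
    (by linarith) (by linarith)
  obtain ⟨C, hC, hCD⟩ := exists_pos_forall_mul_ofReal_le (ENNReal.mul_lt_top hC₁ hC₂)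
  refine ⟨C, hC, fun η => ?_⟩
  calc _ ≤ C₁ * ∫⁻ η₂, ENNReal.ofReal (jap (η + η₂) ^ (-2 + k) * jap η₂ ^ (-κ₂ - 1 / 2 - k)) *
          ENNReal.ofReal (jap (η - η₂) ^ (-(κ₁ + 1 / 2 + (κ₃ + 1 / 2)))) := by
        rw [Measure.volume_eq_prod]
        refine lintegral_prod_le_mul_lintegral hC₁.ne (fun _ => ENNReal.ofReal_ne_top)
          (fun η₁ η₂ => ?_) (fun η₂ => h₁ (η - η₂))
        rw [← ENNReal.ofReal_mul (mul_nonneg (jap_rpow_nonneg _ _) (jap_rpow_nonneg _ _))]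
        congr 1
        simp only [JapConvolution.kernel]
        ring_nf
    _ = C₁ * ∫⁻ η₂,
          ENNReal.ofReal (JapConvolution.kernel 1 1 (κ₂ + 1 / 2) (κ₁ + κ₃ + 1) k η η₂) := by
        congr 1
        refine lintegral_congr fun η₂ => ?_
        rw [← ENNReal.ofReal_mul (mul_nonneg (jap_rpow_nonneg _ _) (jap_rpow_nonneg _ _))]
        congr 1
        simp only [JapConvolution.kernel]
        ring_nf
    _ ≤ C₁ * (C₂ * ENNReal.ofReal (jap η ^ (-(κ₂ + 1 / 2 + (κ₁ + κ₃ + 1))))) := by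
        gcongr; exact h₂ η
    _ ≤ ENNReal.ofReal (C * jap η ^ (-(3 : ℝ) / 2 - κ₁ - κ₂ - κ₃)) := by
        rw [← mul_assoc]
        convert hCD _ using 4
        ring
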